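/- arXiv:0802.1571 — 2 statements merged into one kernel-verified Lean document; each statement's English description precedes it below -/
import Mathlib

section
/- (Fundamental Inequality, lower bound; Garland.) Let X be a finite n-dimensional simplicial complex satisfying condition (1_X) and let 1 ≤ i ≤ n−1. Suppose that for every vertex v of X the reduced simplicial cohomology H̃^{i−1}(Lk(v), ℝ) vanishes, i.e.: if i = 1, every f ∈ C^0(Lk(v)) with d_v f = 0 is constant, and if i ≥ 2, every f ∈ C^{i−1}(Lk(v)) with d_v f = 0 lies in the image of d_v : C^{i−2}(Lk(v)) → C^{i−1}(Lk(v)). Suppose moreover λ > 0 is a real number such that for every vertex v, every nonzero eigenvalue of Δ_v acting on C^{i−1}(Lk(v)) is ≥ λ. Then every nonzero eigenvalue c of Δ acting on C^i(X) satisfies i·c ≥ (i+1)·λ − (n−i). -/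
open Finset

open scoped Classical

variable {V : Type*}

/-- A (finite) simplicial complex on the vertex type `V`: a collection of nonempty
finite sets of vertices (the simplices) closed under passing to nonempty subsets. -/
def IsComplex [DecidableEq V] (K : Finset (Finset V)) : Prop :=
  (∀ s ∈ K, s.Nonempty) ∧ ∀ s ∈ K, ∀ t : Finset V, t ⊆ s → t.Nonempty → t ∈ K

/-- `K` is `n`-dimensional and satisfies condition `(1_X)`: every simplex has dimension
at most `n` and is a face of some `n`-dimensional simplex (one of cardinality `n+1`). -/
def IsPureDim [DecidableEq V] (K : Finset (Finset V)) (n : ℕ) : Prop :=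
  (∀ s ∈ K, s.card ≤ n + 1) ∧ ∀ s ∈ K, ∃ t ∈ K, s ⊆ t ∧ t.card = n + 1

/-- `wt K n s` : the number `w(s)` of `n`-dimensional simplices of `K` containing `s`. -/
noncomputable def wt [DecidableEq V] (K : Finset (Finset V)) (n : ℕ) (s : Finset V) : ℕ :=
  (K.filter fun t => s ⊆ t ∧ t.card = n + 1).card

/-- An `m`-tuple of vertices is allowed when its entries are distinct and form a simplex
of `K`; i.e. it is an oriented `(m-1)`-simplex of `K`. -/
def Allowed [DecidableEq V] [Fintype V] (K : Finset (Finset V)) {m : ℕ}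
    (v : Fin m → V) : Prop :=
  Function.Injective v ∧ Finset.image v Finset.univ ∈ K

/-- `f` is an `(m-1)`-cochain on `K`: a real-valued alternating function on oriented
`(m-1)`-simplices of `K` (realized as a function on all `m`-tuples of vertices which is
alternating and vanishes on tuples which are not oriented simplices of `K`). -/
def IsCochain [DecidableEq V] [Fintype V] (K : Finset (Finset V)) (m : ℕ)
    (f : (Fin m → V) → ℝ) : Prop :=
  (∀ (σ : Equiv.Perm (Fin m)) (v : Fin m → V),
      f (v ∘ σ) = ((Equiv.Perm.sign σ : ℤ) : ℝ) * f v) ∧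
  ∀ v : Fin m → V, ¬ Allowed K v → f v = 0

/-- The inner product `(f,g) = ∑_s w(s)·f(s)·g(s)` on `(m-1)`-cochains, the sum being over
the unoriented `(m-1)`-simplices `s` of `K` (each with an arbitrarily chosen orientation);
summing over all `m`-tuples counts each simplex `m!` times, whence the normalization. -/
noncomputable def innerC [DecidableEq V] [Fintype V] (K : Finset (Finset V)) (n m : ℕ)
    (f g : (Fin m → V) → ℝ) : ℝ :=
  (∑ v : Fin m → V, (wt K n (Finset.image v Finset.univ) : ℝ) * f v * g v) /
    (Nat.factorial m : ℝ)

/-- The coboundary `d : C^{m-1}(K) → C^m(K)`. -/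
noncomputable def cobound [DecidableEq V] [Fintype V] (K : Finset (Finset V)) {m : ℕ}
    (f : (Fin m → V) → ℝ) : (Fin (m + 1) → V) → ℝ :=
  fun v => if Allowed K v then
    ∑ j : Fin (m + 1), (-1 : ℝ) ^ (j : ℕ) * f (v ∘ Fin.succAbove j)
  else 0

/-- The operator `δ : C^m(K) → C^{m-1}(K)`,
`(δf)(s) = ∑_x (w([x,s])/w(s))·f([x,s])`, the sum being over the vertices `x`
such that `[x,s]` is an oriented simplex of `K`. -/
noncomputable def codiff [DecidableEq V] [Fintype V] (K : Finset (Finset V)) (n : ℕ) {m : ℕ}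
    (f : (Fin (m + 1) → V) → ℝ) : (Fin m → V) → ℝ :=
  fun s => ∑ x : V,
    if Allowed K (Fin.cons x s) then
      ((wt K n (Finset.image (Fin.cons x s) Finset.univ) : ℝ) /
          (wt K n (Finset.image s Finset.univ) : ℝ)) * f (Fin.cons x s)
    else 0

/-- The Laplace operator `Δ = δ ∘ d` on `(m-1)`-cochains. -/
noncomputable def lap [DecidableEq V] [Fintype V] (K : Finset (Finset V)) (n : ℕ) {m : ℕ}
    (f : (Fin m → V) → ℝ) : (Fin m → V) → ℝ :=
  codiff K n (cobound K f)

/-- `ρ_v : C^{m-1}(K) → C^{m-1}(K)`: `(ρ_v f)(s) = f(s)` if `v` is a vertex of `s`,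
and `0` otherwise. -/
noncomputable def rho [DecidableEq V] {m : ℕ} (v : V) (f : (Fin m → V) → ℝ) :
    (Fin m → V) → ℝ :=
  fun s => if ∃ j, s j = v then f s else 0

/-- The vertices of `K`. -/
noncomputable def verts [DecidableEq V] [Fintype V] (K : Finset (Finset V)) : Finset V :=
  Finset.univ.filter fun v => {v} ∈ K

/-- The link `Lk(v)` of a vertex `v`: all simplices `s` of `K` with `v ∉ s` and
`s ∪ {v} ∈ K`. -/
noncomputable def linkK [DecidableEq V] (K : Finset (Finset V)) (v : V) :
    Finset (Finset V) :=
  K.filter fun s => v ∉ s ∧ insert v s ∈ K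

/-- `τ_v : C^{m}(K) → C^{m-1}(Lk(v))`: `(τ_v f)(s) = f([v,s])` for `s` an oriented
simplex of the link `Lk(v)`. -/
noncomputable def tau [DecidableEq V] [Fintype V] (K : Finset (Finset V)) (v : V) {m : ℕ}
    (f : (Fin (m + 1) → V) → ℝ) : (Fin m → V) → ℝ :=
  fun s => if Allowed (linkK K v) s then f (Fin.cons v s) else 0

/-- `c` is an eigenvalue of the Laplace operator acting on `(m-1)`-cochains of `K`. -/
def IsEigen [DecidableEq V] [Fintype V] (K : Finset (Finset V)) (n m : ℕ) (c : ℝ) : Prop :=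
  ∃ f : (Fin m → V) → ℝ, f ≠ 0 ∧ IsCochain K m f ∧ lap K n f = c • f

/-!
Garland's method. For an `i`-cochain `f` and a vertex `x`, let `τ_x f = f([x, ·])`, an
`(i-1)`-cochain of `Lk(x)`, and let `r_x f` be the restriction of `f` to `Lk(x)`. Counting
the top simplices through each simplex gives
  `∑_x ‖τ_x f‖² = (i+1) ‖f‖²`  and  `∑_x ‖d_x τ_x f‖² = (n-i) ‖f‖² + i (f, Δf)`,
the second because `d_x τ_x f = r_x f - τ_x df` and `‖df‖² = (f, Δf)`. If `Δf = c f` with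
`c ≠ 0` then `δf = 0`, hence `δ_x τ_x f = 0`; by the vanishing of `H̃^{i-1}(Lk(x))`, `τ_x f`
is then orthogonal to the harmonic cochains of the link, so the spectral gap of `Δ_x` gives
`λ ‖τ_x f‖² ≤ ‖d_x τ_x f‖²`. Summing over `x`: `(i+1) λ ‖f‖² ≤ (n - i + i c) ‖f‖²`.
-/

section Combinatorics

variable [DecidableEq V]

@[simp]
lemma mem_linkK {K : Finset (Finset V)} {x : V} {s : Finset V} :
    s ∈ linkK K x ↔ s ∈ K ∧ x ∉ s ∧ insert x s ∈ K := by
  simp [linkK]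

lemma wt_pos {K : Finset (Finset V)} {n : ℕ} (hpure : IsPureDim K n) {s : Finset V}
    (hs : s ∈ K) : 0 < wt K n s := by
  obtain ⟨t, ht, hst, hcard⟩ := hpure.2 s hs
  exact Finset.card_pos.2 ⟨t, Finset.mem_filter.2 ⟨ht, hst, hcard⟩⟩

lemma wt_anti {K : Finset (Finset V)} {n : ℕ} {s t : Finset V} (hst : s ⊆ t) :
    wt K n t ≤ wt K n s :=
  Finset.card_le_card <| Finset.monotone_filter_right _ fun _ _ h => ⟨hst.trans h.1, h.2⟩

lemma IsComplex.erase_mem {K : Finset (Finset V)} (hcplx : IsComplex K) {t : Finset V}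
    (ht : t ∈ K) {x : V} (hcard : 2 ≤ t.card) : t.erase x ∈ K :=
  hcplx.2 t ht _ (Finset.erase_subset _ _) <| Finset.card_pos.1 <| by
    have := Finset.pred_card_le_card_erase (s := t) (a := x); omega

lemma IsComplex.linkK {K : Finset (Finset V)} (hcplx : IsComplex K) (x : V) :
    IsComplex (linkK K x) := by
  refine ⟨fun s hs => hcplx.1 s (mem_linkK.1 hs).1, fun s hs t hts ht => ?_⟩
  obtain ⟨hsK, hxs, hins⟩ := mem_linkK.1 hs
  exact mem_linkK.2 ⟨hcplx.2 s hsK t hts ht, fun hxt => hxs (hts hxt),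
    hcplx.2 _ hins _ (Finset.insert_subset_insert x hts) (Finset.insert_nonempty _ _)⟩

/-- The top simplices of `Lk(x)` containing `s` are those of `K` containing `insert x s`,
with `x` removed. -/
lemma wt_linkK {K : Finset (Finset V)} {n : ℕ} (hcplx : IsComplex K) (hn : 1 ≤ n)
    {x : V} {s : Finset V} (hx : x ∉ s) :
    wt (linkK K x) (n - 1) s = wt K n (insert x s) := by
  unfold wt
  rw [Nat.sub_add_cancel hn]
  refine Finset.card_bij' (fun u _ => insert x u) (fun t _ => t.erase x) ?_ ?_ ?_ ?_
  · intro u hu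
    obtain ⟨⟨-, hxu, hinsu⟩, hsu, hcard⟩ := by simpa using hu
    simp only [Finset.mem_filter]
    exact ⟨hinsu, Finset.insert_subset_insert x hsu,
      by rw [Finset.card_insert_of_notMem hxu, hcard]⟩
  · intro t ht
    obtain ⟨htK, hst, hcard⟩ := Finset.mem_filter.1 ht
    have hxt : x ∈ t := hst (Finset.mem_insert_self _ _)
    have hcardE : (t.erase x).card = n := by rw [Finset.card_erase_of_mem hxt, hcard]; omega
    simp only [Finset.mem_filter, mem_linkK, Finset.insert_erase hxt]
    exact ⟨⟨hcplx.erase_mem htK (by omega), Finset.notMem_erase _ _, htK⟩,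
      Finset.subset_erase.2 ⟨(Finset.subset_insert _ _).trans hst, hx⟩, hcardE⟩
  · intro u hu
    exact Finset.erase_insert (mem_linkK.1 (Finset.mem_filter.1 hu).1).2.1
  · intro t ht
    exact Finset.insert_erase ((Finset.mem_filter.1 ht).2.1 (Finset.mem_insert_self _ _))

lemma IsPureDim.linkK {K : Finset (Finset V)} {n : ℕ} (hcplx : IsComplex K)
    (hpure : IsPureDim K n) (hn : 1 ≤ n) (x : V) : IsPureDim (linkK K x) (n - 1) := by
  constructor
  · intro s hs
    obtain ⟨-, hxs, hins⟩ := mem_linkK.1 hs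
    have := hpure.1 _ hins
    rw [Finset.card_insert_of_notMem hxs] at this
    omega
  · intro s hs
    obtain ⟨-, hxs, hins⟩ := mem_linkK.1 hs
    obtain ⟨t, ht⟩ := Finset.card_pos.1 (wt_linkK hcplx hn hxs ▸ wt_pos hpure hins)
    exact ⟨t, by simpa using ht⟩

lemma image_comp_perm {m : ℕ} (v : Fin m → V) (σ : Equiv.Perm (Fin m)) :
    Finset.image (v ∘ σ) Finset.univ = Finset.image v Finset.univ := by
  rw [← Finset.image_image, Finset.image_univ_equiv]

lemma image_cons {m : ℕ} (x : V) (s : Fin m → V) :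
    Finset.image (Fin.cons x s) Finset.univ = insert x (Finset.image s Finset.univ) := by
  ext
  simp [Fin.exists_fin_succ, eq_comm]

lemma image_cons_cons_comm {m : ℕ} (x y : V) (s : Fin m → V) :
    Finset.image (Fin.cons y (Fin.cons x s)) Finset.univ
      = Finset.image (Fin.cons x (Fin.cons y s)) Finset.univ := by
  simp only [image_cons, Finset.insert_comm]

end Combinatorics

section Alternating

def IsAlternating (m : ℕ) (f : (Fin m → V) → ℝ) : Prop :=
  ∀ (σ : Equiv.Perm (Fin m)) (v : Fin m → V), f (v ∘ σ) = ((Equiv.Perm.sign σ : ℤ) : ℝ) * f v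

lemma cons_comp_perm {m : ℕ} (x : V) (s : Fin m → V) (σ : Equiv.Perm (Fin m)) :
    Fin.cons x (s ∘ σ)
      = (Fin.cons x s : Fin (m + 1) → V) ∘ Equiv.Perm.decomposeFin.symm (0, σ) := by
  funext k
  refine Fin.cases ?_ (fun k => ?_) k <;> simp

lemma cons_cons_comp_swap {m : ℕ} (x y : V) (s : Fin m → V) :
    (Fin.cons x (Fin.cons y s) : Fin (m + 2) → V) ∘ Equiv.swap 0 1 = Fin.cons y (Fin.cons x s) := by
  funext k
  refine Fin.cases ?_ (fun k => Fin.cases ?_ (fun k => ?_) k) k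
  · simp
  · simp [show ((0 : Fin (m + 1)).succ : Fin (m + 2)) = 1 from rfl]
  · rw [Function.comp_apply, Equiv.swap_apply_of_ne_of_ne (Fin.succ_ne_zero _)
      (by simp [Fin.ext_iff])]
    simp

lemma IsAlternating.apply_cons_comp {m : ℕ} {f : (Fin (m + 1) → V) → ℝ}
    (hf : IsAlternating (m + 1) f) (x : V) (s : Fin m → V) (σ : Equiv.Perm (Fin m)) :
    f (Fin.cons x (s ∘ σ)) = ((Equiv.Perm.sign σ : ℤ) : ℝ) * f (Fin.cons x s) := by
  rw [cons_comp_perm, hf, Equiv.Perm.decomposeFin.symm_sign, if_pos rfl, one_mul]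

lemma IsAlternating.apply_cons_cons {m : ℕ} {f : (Fin (m + 2) → V) → ℝ}
    (hf : IsAlternating (m + 2) f) (x y : V) (s : Fin m → V) :
    f (Fin.cons y (Fin.cons x s)) = -f (Fin.cons x (Fin.cons y s)) := by
  rw [← cons_cons_comp_swap, hf, Equiv.Perm.sign_swap (by simp)]
  simp

lemma IsAlternating.apply_tail_comp {m : ℕ} {f : (Fin m → V) → ℝ} (hf : IsAlternating m f)
    (w : Fin (m + 1) → V) {π : Equiv.Perm (Fin (m + 1))} (hπ : π 0 = 0) :
    f (Fin.tail (w ∘ π)) = ((Equiv.Perm.sign π : ℤ) : ℝ) * f (Fin.tail w) := by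
  obtain ⟨τ, rfl⟩ : ∃ τ, Equiv.Perm.decomposeFin.symm (0, τ) = π := by
    have h0 : (Equiv.Perm.decomposeFin π).1 = 0 := by
      rw [← hπ, ← Equiv.Perm.decomposeFin_symm_apply_zero (Equiv.Perm.decomposeFin π).1
        (Equiv.Perm.decomposeFin π).2, Prod.mk.eta, Equiv.symm_apply_apply]
    exact ⟨_, (Equiv.symm_apply_eq _).2 (Prod.ext h0.symm rfl)⟩
  have htail : Fin.tail (w ∘ Equiv.Perm.decomposeFin.symm (0, τ)) = Fin.tail w ∘ τ := by
    funext k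
    simp [Fin.tail, Equiv.Perm.decomposeFin_symm_apply_succ]
  rw [htail, hf, Equiv.Perm.decomposeFin.symm_sign, if_pos rfl, one_mul]

end Alternating

section Tuples

variable [DecidableEq V] [Fintype V]

lemma allowed_comp_perm {K : Finset (Finset V)} {m : ℕ} {v : Fin m → V}
    (σ : Equiv.Perm (Fin m)) : Allowed K (v ∘ σ) ↔ Allowed K v := by
  rw [Allowed, Allowed, image_comp_perm, EquivLike.injective_comp]

lemma allowed_cons_cons_comm {K : Finset (Finset V)} {m : ℕ} {x y : V} {s : Fin m → V} :
    Allowed K (Fin.cons y (Fin.cons x s)) ↔ Allowed K (Fin.cons x (Fin.cons y s)) := by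
  rw [← cons_cons_comp_swap, allowed_comp_perm]

lemma allowed_linkK_iff {K : Finset (Finset V)} {x : V} {m : ℕ} {s : Fin m → V} :
    Allowed (linkK K x) s ↔ Allowed K s ∧ x ∉ Finset.image s Finset.univ ∧
      insert x (Finset.image s Finset.univ) ∈ K := by
  simp only [Allowed, mem_linkK]
  tauto

lemma allowed_cons_iff {K : Finset (Finset V)} (hcplx : IsComplex K) {m : ℕ}
    [NeZero m] (x : V) (s : Fin m → V) :
    Allowed K (Fin.cons x s) ↔ Allowed (linkK K x) s := by
  have hne : (Finset.image s Finset.univ).Nonempty := Finset.univ_nonempty.image s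
  rw [allowed_linkK_iff, Allowed, Allowed, Fin.cons_injective_iff, image_cons]
  simp only [Set.mem_range, Finset.mem_image, Finset.mem_univ, true_and]
  constructor
  · rintro ⟨⟨hx, hs⟩, hmem⟩
    exact ⟨⟨hs, hcplx.2 _ hmem _ (Finset.subset_insert _ _) hne⟩, hx, hmem⟩
  · rintro ⟨⟨hs, -⟩, hx, hmem⟩
    exact ⟨⟨hx, hs⟩, hmem⟩

lemma mem_verts_of_allowed_linkK {K : Finset (Finset V)} (hcplx : IsComplex K) {x : V}
    {m : ℕ} {s : Fin m → V} (h : Allowed (linkK K x) s) : x ∈ verts K := by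
  obtain ⟨-, -, hins⟩ := mem_linkK.1 h.2
  simpa [verts] using hcplx.2 _ hins {x} (by simp) (by simp)

lemma allowed_comp_succAbove {K : Finset (Finset V)} (hcplx : IsComplex K) {m : ℕ}
    [NeZero m] {v : Fin (m + 1) → V} (hv : Allowed K v) (j : Fin (m + 1)) :
    Allowed K (v ∘ Fin.succAbove j) := by
  refine ⟨hv.1.comp Fin.succAbove_right_injective, hcplx.2 _ hv.2 _ ?_ ?_⟩
  · rw [← Finset.image_image]
    exact Finset.image_subset_image (Finset.subset_univ _)
  · exact Finset.univ_nonempty.image _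

lemma allowed_of_allowed_cons {K : Finset (Finset V)} (hcplx : IsComplex K) {m : ℕ}
    [NeZero m] {x : V} {s : Fin m → V} (h : Allowed K (Fin.cons x s)) : Allowed K s := by
  simpa using allowed_comp_succAbove hcplx h 0

/-- Double counting of pairs `(x, t)` with `t` a top simplex and `x ∈ t \ A`. -/
lemma sum_wt_insert {K : Finset (Finset V)} {n : ℕ} (hcplx : IsComplex K)
    {m : ℕ} {A : Finset V} (hcard : A.card = m + 1) :
    ∑ x : V, (if x ∉ A ∧ insert x A ∈ K then wt K n (insert x A) else 0)
      = (n - m) * wt K n A := by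
  have hx : ∀ x : V, (if x ∉ A ∧ insert x A ∈ K then wt K n (insert x A) else 0)
      = ∑ t ∈ K, if x ∈ t \ A ∧ A ⊆ t ∧ t.card = n + 1 then 1 else 0 := by
    intro x
    rw [← Finset.card_filter]
    split_ifs with h
    · simp only [wt, Finset.insert_subset_iff, Finset.mem_sdiff, h.1, not_false_eq_true,
        and_true]
      congr 1
      exact Finset.filter_congr fun t _ => by tauto
    · refine (Finset.card_eq_zero.2 <| Finset.filter_eq_empty_iff.2 ?_).symm
      rintro t ht ⟨hxt, hAt, -⟩
      exact h ⟨(Finset.mem_sdiff.1 hxt).2, hcplx.2 t ht _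
        (Finset.insert_subset (Finset.mem_sdiff.1 hxt).1 hAt) (Finset.insert_nonempty _ _)⟩
  have ht : ∀ t ∈ K, (∑ x : V, if x ∈ t \ A ∧ A ⊆ t ∧ t.card = n + 1 then 1 else 0)
      = if A ⊆ t ∧ t.card = n + 1 then n - m else 0 := by
    intro t _
    split_ifs with h
    · simp only [h, and_true, Finset.sum_boole, Nat.cast_id, Finset.filter_mem_eq_inter,
        Finset.univ_inter, Finset.card_sdiff_of_subset h.1, hcard]
      omega
    · simp [h]
  rw [Finset.sum_congr rfl fun x _ => hx x, Finset.sum_comm, Finset.sum_congr rfl ht,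
    ← Finset.sum_filter, Finset.sum_const, smul_eq_mul, wt, mul_comm]

end Tuples

lemma sum_tuples_cons [Fintype V] {m : ℕ} (F : (Fin (m + 1) → V) → ℝ) :
    ∑ t : Fin (m + 1) → V, F t = ∑ x : V, ∑ s : Fin m → V, F (Fin.cons x s) := by
  rw [← Equiv.sum_comp (Fin.consEquiv fun _ => V) F, Fintype.sum_prod_type]
  rfl

lemma sum_tuples_comp_perm [Fintype V] {m : ℕ} (σ : Equiv.Perm (Fin m))
    (F : (Fin m → V) → ℝ) : ∑ t : Fin m → V, F (t ∘ σ) = ∑ t : Fin m → V, F t :=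
  Fintype.sum_equiv (σ.symm.arrowCongr (Equiv.refl V)) _ _ fun _ => rfl

lemma sum_sum_eq_zero_of_antisymm {ι : Type*} [Fintype ι] (T : ι → ι → ℝ)
    (hT : ∀ x y, T x y = -T y x) : ∑ x, ∑ y, T x y = 0 := by
  have h : ∑ x, ∑ y, T x y = -∑ x, ∑ y, T x y := by
    conv_lhs => rw [Finset.sum_comm]
    rw [← Finset.sum_neg_distrib]
    refine Finset.sum_congr rfl fun y _ => ?_
    rw [← Finset.sum_neg_distrib]
    exact Finset.sum_congr rfl fun x _ => hT x y
  linarith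

section Operators

variable [DecidableEq V] [Fintype V]

lemma cobound_apply_of_allowed {K : Finset (Finset V)} {m : ℕ} (f : (Fin m → V) → ℝ)
    {v : Fin (m + 1) → V} (hv : Allowed K v) :
    cobound K f v = ∑ j : Fin (m + 1), ((Equiv.Perm.sign (Fin.cycleRange j) : ℤ) : ℝ) *
      f (Fin.tail (v ∘ (Fin.cycleRange j).symm)) := by
  rw [cobound, if_pos hv]
  refine Finset.sum_congr rfl fun j _ => ?_
  have htail : Fin.tail (v ∘ (Fin.cycleRange j).symm) = v ∘ Fin.succAbove j := by
    funext k
    simp [Fin.tail, Fin.cycleRange_symm_succ]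
  rw [Fin.sign_cycleRange, htail]
  push_cast
  ring

lemma cobound_apply_of_not_allowed {K : Finset (Finset V)} {m : ℕ} (f : (Fin m → V) → ℝ)
    {v : Fin (m + 1) → V} (hv : ¬ Allowed K v) : cobound K f v = 0 :=
  if_neg hv

/-- With `c_j = Fin.cycleRange j`, the `j`-th term of `df(v ∘ σ)` is the `σ j`-th term of
`df(v)` times `sign σ`, because `c_{σ j} σ c_j⁻¹` fixes `0`. -/
lemma IsAlternating.cobound {K : Finset (Finset V)} {m : ℕ} {f : (Fin m → V) → ℝ}
    (hf : IsAlternating m f) : IsAlternating (m + 1) (cobound K f) := by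
  intro σ v
  by_cases hv : Allowed K v
  · rw [cobound_apply_of_allowed f ((allowed_comp_perm σ).2 hv), cobound_apply_of_allowed f hv,
      Finset.mul_sum]
    conv_rhs => rw [← Equiv.sum_comp σ]
    refine Finset.sum_congr rfl fun j _ => ?_
    set c := Fin.cycleRange j
    set c' := Fin.cycleRange (σ j)
    have hface := hf.apply_tail_comp (v ∘ c'.symm) (π := c' * σ * c.symm)
      (by simp [c, c', Fin.cycleRange_symm_zero])
    rw [show (v ∘ c'.symm) ∘ ⇑(c' * σ * c.symm) = (v ∘ σ) ∘ c.symm by ext; simp] at hface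
    have hsq : ((Equiv.Perm.sign c : ℤ) : ℝ) * ((Equiv.Perm.sign c : ℤ) : ℝ) = 1 := by
      rw [← Int.cast_mul, ← Units.val_mul, Int.units_mul_self, Units.val_one, Int.cast_one]
    rw [hface]
    simp only [Equiv.Perm.sign_mul, Equiv.Perm.sign_symm, Units.val_mul, Int.cast_mul]
    linear_combination ((Equiv.Perm.sign c' : ℤ) : ℝ) * ((Equiv.Perm.sign σ : ℤ) : ℝ) *
      f (Fin.tail (v ∘ c'.symm)) * hsq
  · rw [cobound_apply_of_not_allowed f hv,
      cobound_apply_of_not_allowed f (mt (allowed_comp_perm σ).1 hv), mul_zero]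

lemma IsAlternating.codiff {K : Finset (Finset V)} {n m : ℕ} {g : (Fin (m + 1) → V) → ℝ}
    (hg : IsAlternating (m + 1) g) : IsAlternating m (codiff K n g) := by
  intro σ s
  unfold _root_.codiff
  simp only [Finset.mul_sum, cons_comp_perm, allowed_comp_perm, image_comp_perm]
  refine Finset.sum_congr rfl fun x _ => ?_
  split_ifs
  · rw [← cons_comp_perm, hg.apply_cons_comp]
    ring
  · rw [mul_zero]

lemma codiff_apply_of_not_allowed {K : Finset (Finset V)} (hcplx : IsComplex K) {n m : ℕ}
    [NeZero m] (g : (Fin (m + 1) → V) → ℝ) {s : Fin m → V} (hs : ¬ Allowed K s) :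
    codiff K n g s = 0 :=
  Finset.sum_eq_zero fun _ _ => if_neg fun h => hs (allowed_of_allowed_cons hcplx h)

lemma IsCochain.cobound {K : Finset (Finset V)} {m : ℕ} {f : (Fin m → V) → ℝ}
    (hf : IsCochain K m f) : IsCochain K (m + 1) (cobound K f) :=
  ⟨IsAlternating.cobound hf.1, fun _ hv => cobound_apply_of_not_allowed f hv⟩

lemma IsCochain.codiff {K : Finset (Finset V)} (hcplx : IsComplex K) {n m : ℕ} [NeZero m]
    {g : (Fin (m + 1) → V) → ℝ} (hg : IsCochain K (m + 1) g) : IsCochain K m (codiff K n g) :=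
  ⟨IsAlternating.codiff hg.1, fun _ hv => codiff_apply_of_not_allowed hcplx _ hv⟩

lemma IsCochain.tau {K : Finset (Finset V)} {x : V} {m : ℕ} {f : (Fin (m + 1) → V) → ℝ}
    (hf : IsCochain K (m + 1) f) : IsCochain (linkK K x) m (tau K x f) := by
  refine ⟨fun σ s => ?_, fun _ hv => if_neg hv⟩
  unfold _root_.tau
  simp only [allowed_comp_perm]
  split_ifs
  · exact IsAlternating.apply_cons_comp hf.1 x s σ
  · rw [mul_zero]

lemma tau_eq_zero_of_not_mem_verts {K : Finset (Finset V)} (hcplx : IsComplex K) {x : V}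
    (hx : x ∉ verts K) {m : ℕ} (f : (Fin (m + 1) → V) → ℝ) : tau K x f = 0 :=
  funext fun _ => if_neg fun h => hx (mem_verts_of_allowed_linkK hcplx h)

lemma cobound_add (K : Finset (Finset V)) {m : ℕ} (f g : (Fin m → V) → ℝ) :
    cobound K (f + g) = cobound K f + cobound K g := by
  funext v
  simp only [cobound, Pi.add_apply, mul_add, Finset.sum_add_distrib]
  split_ifs <;> simp

lemma cobound_smul (K : Finset (Finset V)) {m : ℕ} (c : ℝ) (f : (Fin m → V) → ℝ) :
    cobound K (c • f) = c • cobound K f := by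
  funext v
  simp only [cobound, Pi.smul_apply, smul_eq_mul]
  split_ifs <;> simp [Finset.mul_sum, mul_left_comm]

lemma codiff_add (K : Finset (Finset V)) (n : ℕ) {m : ℕ} (f g : (Fin (m + 1) → V) → ℝ) :
    codiff K n (f + g) = codiff K n f + codiff K n g := by
  funext s
  simp only [codiff, Pi.add_apply, ← Finset.sum_add_distrib]
  refine Finset.sum_congr rfl fun x _ => ?_
  split_ifs <;> ring

lemma codiff_smul (K : Finset (Finset V)) (n : ℕ) {m : ℕ} (c : ℝ) (f : (Fin (m + 1) → V) → ℝ) :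
    codiff K n (c • f) = c • codiff K n f := by
  funext s
  simp only [codiff, Pi.smul_apply, smul_eq_mul, Finset.mul_sum]
  refine Finset.sum_congr rfl fun x _ => ?_
  split_ifs <;> ring

end Operators

section InnerProduct

variable [DecidableEq V] [Fintype V]

lemma innerC_comm (K : Finset (Finset V)) (n m : ℕ) (f g : (Fin m → V) → ℝ) :
    innerC K n m f g = innerC K n m g f := by
  simp only [innerC, mul_right_comm _ (f _)]

lemma innerC_add_left (K : Finset (Finset V)) (n m : ℕ) (f g h : (Fin m → V) → ℝ) :
    innerC K n m (f + g) h = innerC K n m f h + innerC K n m g h := by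
  simp only [innerC, Pi.add_apply, mul_add, add_mul, Finset.sum_add_distrib, add_div]

lemma innerC_smul_left (K : Finset (Finset V)) (n m : ℕ) (c : ℝ) (f g : (Fin m → V) → ℝ) :
    innerC K n m (c • f) g = c * innerC K n m f g := by
  simp only [innerC, Pi.smul_apply, smul_eq_mul, mul_div_assoc', Finset.mul_sum]
  congr 1
  exact Finset.sum_congr rfl fun _ _ => by ring

lemma innerC_smul_right (K : Finset (Finset V)) (n m : ℕ) (c : ℝ) (f g : (Fin m → V) → ℝ) :
    innerC K n m f (c • g) = c * innerC K n m f g := by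
  rw [innerC_comm, innerC_smul_left, innerC_comm]

lemma innerC_zero_right (K : Finset (Finset V)) (n m : ℕ) (f : (Fin m → V) → ℝ) :
    innerC K n m f 0 = 0 := by
  simp [innerC]

lemma innerC_sub_sub_self (K : Finset (Finset V)) (n m : ℕ) (f g : (Fin m → V) → ℝ) :
    innerC K n m (f - g) (f - g)
      = innerC K n m f f - 2 * innerC K n m f g + innerC K n m g g := by
  unfold innerC
  have : ∑ v : Fin m → V, (wt K n (Finset.image v Finset.univ) : ℝ) * (f - g) v * (f - g) v
      = ∑ v : Fin m → V, (wt K n (Finset.image v Finset.univ) : ℝ) * f v * f v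
        - 2 * ∑ v : Fin m → V, (wt K n (Finset.image v Finset.univ) : ℝ) * f v * g v
        + ∑ v : Fin m → V, (wt K n (Finset.image v Finset.univ) : ℝ) * g v * g v := by
    rw [Finset.mul_sum, ← Finset.sum_sub_distrib, ← Finset.sum_add_distrib]
    exact Finset.sum_congr rfl fun _ _ => by simp only [Pi.sub_apply]; ring
  rw [this]
  ring

lemma innerC_self_nonneg (K : Finset (Finset V)) (n m : ℕ) (f : (Fin m → V) → ℝ) :
    0 ≤ innerC K n m f f := by
  refine div_nonneg (Finset.sum_nonneg fun v _ => ?_) (Nat.cast_nonneg _)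
  rw [mul_assoc]
  exact mul_nonneg (Nat.cast_nonneg _) (mul_self_nonneg _)

lemma innerC_self_pos {K : Finset (Finset V)} {n : ℕ} (hpure : IsPureDim K n) {m : ℕ}
    {f : (Fin m → V) → ℝ} (hf : IsCochain K m f) (hne : f ≠ 0) : 0 < innerC K n m f f := by
  obtain ⟨v, hv⟩ := Function.ne_iff.1 hne
  have hw : (0 : ℝ) < wt K n (Finset.image v Finset.univ) := by
    exact_mod_cast wt_pos hpure (not_imp_comm.1 (hf.2 v) hv).2
  refine div_pos (Finset.sum_pos' (fun u _ => ?_) ⟨v, Finset.mem_univ _, ?_⟩) (by positivity)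
  · rw [mul_assoc]
    exact mul_nonneg (Nat.cast_nonneg _) (mul_self_nonneg _)
  · rw [mul_assoc]
    exact mul_pos hw (mul_self_pos.2 hv)

lemma eq_zero_of_innerC_self_eq_zero {K : Finset (Finset V)} {n : ℕ} (hpure : IsPureDim K n)
    {m : ℕ} {f : (Fin m → V) → ℝ} (hf : IsCochain K m f) (h : innerC K n m f f = 0) :
    f = 0 := by
  by_contra hne
  exact (innerC_self_pos hpure hf hne).ne' h

end InnerProduct

section Codifferential

variable [DecidableEq V] [Fintype V]

/-- `w(s) · (δg)(s)`, which, unlike `δg`, involves no division. -/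
noncomputable def weightedCodiff (K : Finset (Finset V)) (n : ℕ) {m : ℕ}
    (g : (Fin (m + 1) → V) → ℝ) (s : Fin m → V) : ℝ :=
  ∑ x : V, if Allowed K (Fin.cons x s) then
    (wt K n (Finset.image (Fin.cons x s) Finset.univ) : ℝ) * g (Fin.cons x s) else 0

lemma codiff_eq_weightedCodiff_div (K : Finset (Finset V)) (n : ℕ) {m : ℕ}
    (g : (Fin (m + 1) → V) → ℝ) (s : Fin m → V) :
    codiff K n g s = weightedCodiff K n g s / wt K n (Finset.image s Finset.univ) := by
  rw [codiff, weightedCodiff, Finset.sum_div]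
  refine Finset.sum_congr rfl fun x _ => ?_
  split_ifs <;> ring

/-- This holds also when `w(s) = 0`, where `δg(s)` divides by zero: then every `w([x,s])`
vanishes too. -/
lemma wt_mul_codiff (K : Finset (Finset V)) (n : ℕ) {m : ℕ} (g : (Fin (m + 1) → V) → ℝ)
    (s : Fin m → V) :
    wt K n (Finset.image s Finset.univ) * codiff K n g s = weightedCodiff K n g s := by
  rw [codiff_eq_weightedCodiff_div]
  by_cases hw : wt K n (Finset.image s Finset.univ) = 0
  · rw [hw, Nat.cast_zero, zero_mul, weightedCodiff]
    refine (Finset.sum_eq_zero fun x _ => ?_).symm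
    have : wt K n (Finset.image (Fin.cons x s) Finset.univ) = 0 :=
      Nat.eq_zero_of_le_zero (hw ▸ wt_anti (by rw [image_cons]; exact Finset.subset_insert _ _))
    simp [this]
  · field_simp

lemma weightedCodiff_eq_zero_of_codiff_eq_zero {K : Finset (Finset V)} {n m : ℕ}
    {g : (Fin (m + 1) → V) → ℝ} (hg : codiff K n g = 0) : weightedCodiff K n g = 0 :=
  funext fun s => by simp [← wt_mul_codiff, hg]

lemma sum_wt_mul_eq_sum_weightedCodiff (K : Finset (Finset V)) (n : ℕ) {m : ℕ}
    {g : (Fin (m + 1) → V) → ℝ} (hg : ∀ t, ¬ Allowed K t → g t = 0) :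
    ∑ t : Fin (m + 1) → V, (wt K n (Finset.image t Finset.univ) : ℝ) * g t
      = ∑ s : Fin m → V, weightedCodiff K n g s := by
  rw [sum_tuples_cons, Finset.sum_comm]
  refine Finset.sum_congr rfl fun s _ => Finset.sum_congr rfl fun x _ => ?_
  split_ifs with h
  · rfl
  · rw [hg _ h, mul_zero]

/-- `δδg(s)` is, up to the factor `1 / w(s)`, the double sum of `w([y,x,s]) g([y,x,s])`,
which is antisymmetric in `(x, y)`. -/
lemma codiff_codiff {K : Finset (Finset V)} (hcplx : IsComplex K) {n m : ℕ}
    {g : (Fin (m + 2) → V) → ℝ} (hg : IsAlternating (m + 2) g) :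
    codiff K n (codiff K n g) = 0 := by
  funext s
  rw [codiff_eq_weightedCodiff_div, Pi.zero_apply, div_eq_zero_iff]
  left
  have hx : ∀ x : V, (if Allowed K (Fin.cons x s) then
      (wt K n (Finset.image (Fin.cons x s) Finset.univ) : ℝ) * codiff K n g (Fin.cons x s)
      else 0) = weightedCodiff K n g (Fin.cons x s) := by
    intro x
    split_ifs with h
    · exact wt_mul_codiff K n g _
    · exact (Finset.sum_eq_zero fun y _ =>
        if_neg fun h' => h (allowed_of_allowed_cons hcplx h')).symm
  simp only [weightedCodiff] at hx ⊢
  rw [Finset.sum_congr rfl fun x _ => hx x]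
  refine sum_sum_eq_zero_of_antisymm _ fun x y => ?_
  rw [allowed_cons_cons_comm, image_cons_cons_comm, hg.apply_cons_cons x y]
  split_ifs <;> ring

lemma weightedCodiff_linkK_tau {K : Finset (Finset V)} (hcplx : IsComplex K) {n : ℕ}
    (hn : 1 ≤ n) {m : ℕ} {g : (Fin (m + 2) → V) → ℝ} (hg : IsAlternating (m + 2) g) (x : V)
    (s : Fin m → V) :
    weightedCodiff (linkK K x) (n - 1) (tau K x g) s = -weightedCodiff K n g (Fin.cons x s) := by
  rw [weightedCodiff, weightedCodiff, ← Finset.sum_neg_distrib]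
  refine Finset.sum_congr rfl fun y _ => ?_
  have hiff : Allowed (linkK K x) (Fin.cons y s) ↔ Allowed K (Fin.cons y (Fin.cons x s)) := by
    rw [allowed_cons_cons_comm, allowed_cons_iff hcplx]
  by_cases h : Allowed (linkK K x) (Fin.cons y s)
  · rw [if_pos h, if_pos (hiff.1 h), tau, if_pos h, wt_linkK hcplx hn (allowed_linkK_iff.1 h).2.1,
      hg.apply_cons_cons x y, ← image_cons, image_cons_cons_comm]
    ring
  · rw [if_neg h, if_neg (mt hiff.2 h), neg_zero]

lemma codiff_linkK_tau_eq_zero {K : Finset (Finset V)} (hcplx : IsComplex K) {n : ℕ}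
    (hn : 1 ≤ n) {m : ℕ} {g : (Fin (m + 2) → V) → ℝ} (hg : IsAlternating (m + 2) g)
    (hδ : codiff K n g = 0) (x : V) : codiff (linkK K x) (n - 1) (tau K x g) = 0 := by
  funext s
  rw [codiff_eq_weightedCodiff_div, weightedCodiff_linkK_tau hcplx hn hg,
    weightedCodiff_eq_zero_of_codiff_eq_zero hδ]
  simp

end Codifferential

section Adjointness

variable [DecidableEq V] [Fintype V]

lemma sum_wt_mul_codiff (K : Finset (Finset V)) (n : ℕ) {m : ℕ} (f : (Fin m → V) → ℝ)
    (g : (Fin (m + 1) → V) → ℝ) :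
    ∑ s : Fin m → V, (wt K n (Finset.image s Finset.univ) : ℝ) * f s * codiff K n g s
      = ∑ u : Fin (m + 1) → V, if Allowed K u then
          (wt K n (Finset.image u Finset.univ) : ℝ) * f (Fin.tail u) * g u else 0 := by
  rw [sum_tuples_cons, Finset.sum_comm]
  refine Finset.sum_congr rfl fun s _ => ?_
  rw [mul_right_comm, wt_mul_codiff, weightedCodiff, Finset.sum_mul]
  refine Finset.sum_congr rfl fun x _ => ?_
  split_ifs
  · rw [Fin.tail_cons]; ring
  · rw [zero_mul]

/-- Each face term `f(tail (t ∘ c_j⁻¹))` of `df(t)` becomes, after reindexing by the cycle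
`c_j`, the same sum: hence the factor `m + 1`. -/
lemma sum_wt_mul_cobound (K : Finset (Finset V)) (n : ℕ) {m : ℕ} (f : (Fin m → V) → ℝ)
    {g : (Fin (m + 1) → V) → ℝ} (hg : IsAlternating (m + 1) g) :
    ∑ t : Fin (m + 1) → V, (wt K n (Finset.image t Finset.univ) : ℝ) * cobound K f t * g t
      = (m + 1) * ∑ u : Fin (m + 1) → V, if Allowed K u then
          (wt K n (Finset.image u Finset.univ) : ℝ) * f (Fin.tail u) * g u else 0 := by
  set H : (Fin (m + 1) → V) → ℝ := fun u => if Allowed K u then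
    (wt K n (Finset.image u Finset.univ) : ℝ) * f (Fin.tail u) * g u else 0 with hH
  have hterm : ∀ t : Fin (m + 1) → V,
      (wt K n (Finset.image t Finset.univ) : ℝ) * cobound K f t * g t
        = ∑ j : Fin (m + 1), H (t ∘ (Fin.cycleRange j).symm) := by
    intro t
    simp only [hH, allowed_comp_perm, image_comp_perm, hg _ t, Equiv.Perm.sign_symm]
    by_cases ht : Allowed K t
    · simp only [cobound_apply_of_allowed f ht, if_pos ht, Finset.mul_sum, Finset.sum_mul]
      exact Finset.sum_congr rfl fun _ _ => by ring
    · simp [cobound_apply_of_not_allowed f ht, ht]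
  rw [Finset.sum_congr rfl fun t _ => hterm t, Finset.sum_comm,
    Finset.sum_congr rfl fun j _ => sum_tuples_comp_perm _ H, Finset.sum_const,
    Finset.card_univ, Fintype.card_fin, nsmul_eq_mul]
  push_cast
  ring

lemma innerC_cobound (K : Finset (Finset V)) (n : ℕ) {m : ℕ} (f : (Fin m → V) → ℝ)
    {g : (Fin (m + 1) → V) → ℝ} (hg : IsAlternating (m + 1) g) :
    innerC K n (m + 1) (cobound K f) g = innerC K n m f (codiff K n g) := by
  unfold innerC
  rw [sum_wt_mul_cobound K n f hg, sum_wt_mul_codiff, Nat.factorial_succ]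
  push_cast
  field_simp

lemma innerC_lap_left (K : Finset (Finset V)) (n : ℕ) {m : ℕ} {f : (Fin m → V) → ℝ}
    (hf : IsAlternating m f) (g : (Fin m → V) → ℝ) :
    innerC K n m (lap K n f) g = innerC K n (m + 1) (cobound K f) (cobound K g) := by
  rw [innerC_comm, lap, ← innerC_cobound K n g hf.cobound, innerC_comm]

lemma cobound_eq_zero_of_lap_eq_zero {K : Finset (Finset V)} {n m : ℕ} (hpure : IsPureDim K n)
    {f : (Fin m → V) → ℝ} (hf : IsCochain K m f) (hlap : lap K n f = 0) : cobound K f = 0 :=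
  eq_zero_of_innerC_self_eq_zero hpure hf.cobound <| by
    rw [← innerC_lap_left K n hf.1, hlap, innerC_comm, innerC_zero_right]

lemma codiff_eq_zero_of_lap_eq_smul {K : Finset (Finset V)} (hcplx : IsComplex K) {n m : ℕ}
    {f : (Fin (m + 1) → V) → ℝ} (hf : IsAlternating (m + 1) f) {c : ℝ}
    (hlap : lap K n f = c • f) (hc : c ≠ 0) : codiff K n f = 0 := by
  have h := codiff_codiff (n := n) hcplx (hf.cobound (K := K))
  rw [← lap, hlap, codiff_smul] at h
  exact (smul_eq_zero.1 h).resolve_left hc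

end Adjointness

section Localization

variable [DecidableEq V] [Fintype V]

noncomputable def linkRestrict (K : Finset (Finset V)) (x : V) {m : ℕ}
    (f : (Fin m → V) → ℝ) : (Fin m → V) → ℝ :=
  fun s => if Allowed (linkK K x) s then f s else 0

lemma sum_innerC_tau_self {K : Finset (Finset V)} {n : ℕ} (hcplx : IsComplex K) (hn : 1 ≤ n)
    {m : ℕ} [NeZero m] {g : (Fin (m + 1) → V) → ℝ} (hg : ∀ t, ¬ Allowed K t → g t = 0) :
    ∑ x : V, innerC (linkK K x) (n - 1) m (tau K x g) (tau K x g)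
      = (m + 1) * innerC K n (m + 1) g g := by
  unfold innerC
  rw [← Finset.sum_div, sum_tuples_cons, Nat.factorial_succ]
  have hx : ∀ (x : V) (s : Fin m → V),
      (wt (linkK K x) (n - 1) (Finset.image s Finset.univ) : ℝ) * tau K x g s * tau K x g s
        = (wt K n (Finset.image (Fin.cons x s) Finset.univ) : ℝ) *
            g (Fin.cons x s) * g (Fin.cons x s) := by
    intro x s
    by_cases h : Allowed (linkK K x) s
    · rw [tau, if_pos h, image_cons, ← wt_linkK hcplx hn (allowed_linkK_iff.1 h).2.1]
    · rw [tau, if_neg h, hg _ (mt (allowed_cons_iff hcplx x s).1 h)]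
      ring
  simp only [hx]
  push_cast
  field_simp

lemma sum_innerC_linkRestrict_self {K : Finset (Finset V)} {n : ℕ} (hcplx : IsComplex K)
    (hn : 1 ≤ n) {m : ℕ} {f : (Fin (m + 1) → V) → ℝ} (hf : IsCochain K (m + 1) f) :
    ∑ x : V, innerC (linkK K x) (n - 1) (m + 1) (linkRestrict K x f) (linkRestrict K x f)
      = ((n - m : ℕ) : ℝ) * innerC K n (m + 1) f f := by
  unfold innerC
  rw [← Finset.sum_div, ← mul_div_assoc, Finset.sum_comm, Finset.mul_sum]
  congr 1
  refine Finset.sum_congr rfl fun s _ => ?_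
  by_cases hs : Allowed K s
  · have hcount := sum_wt_insert (K := K) (n := n) hcplx (A := Finset.image s Finset.univ)
      (by rw [Finset.card_image_of_injective _ hs.1, Finset.card_univ, Fintype.card_fin])
    have hx : ∀ x : V, (wt (linkK K x) (n - 1) (Finset.image s Finset.univ) : ℝ) *
        linkRestrict K x f s * linkRestrict K x f s
          = ((if x ∉ Finset.image s Finset.univ ∧ insert x (Finset.image s Finset.univ) ∈ K
            then wt K n (insert x (Finset.image s Finset.univ)) else 0 : ℕ) : ℝ) * (f s * f s) := by
      intro x
      have hiff := allowed_linkK_iff (K := K) (x := x) (s := s)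
      simp only [hs, true_and] at hiff
      by_cases h : Allowed (linkK K x) s
      · rw [linkRestrict, if_pos h, if_pos (hiff.1 h), wt_linkK hcplx hn (hiff.1 h).1]
        ring
      · rw [linkRestrict, if_neg h, if_neg (mt hiff.2 h)]
        ring
    rw [Finset.sum_congr rfl fun x _ => hx x, ← Finset.sum_mul, ← Nat.cast_sum, hcount]
    push_cast
    ring
  · simp [linkRestrict, hf.2 s hs]

lemma sum_innerC_linkRestrict_tau {K : Finset (Finset V)} {n : ℕ} (hcplx : IsComplex K)
    (hn : 1 ≤ n) {m : ℕ} (f : (Fin (m + 1) → V) → ℝ) (g : (Fin (m + 2) → V) → ℝ) :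
    ∑ x : V, innerC (linkK K x) (n - 1) (m + 1) (linkRestrict K x f) (tau K x g)
      = innerC K n (m + 1) f (codiff K n g) := by
  unfold innerC
  rw [← Finset.sum_div, Finset.sum_comm]
  congr 1
  refine Finset.sum_congr rfl fun s _ => ?_
  rw [mul_assoc, mul_left_comm, wt_mul_codiff, weightedCodiff, Finset.mul_sum]
  refine Finset.sum_congr rfl fun x _ => ?_
  by_cases h : Allowed (linkK K x) s
  · rw [linkRestrict, tau, if_pos h, if_pos h, if_pos ((allowed_cons_iff hcplx x s).2 h),
      wt_linkK hcplx hn (allowed_linkK_iff.1 h).2.1, image_cons]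
    ring
  · rw [linkRestrict, if_neg h, if_neg (mt (allowed_cons_iff hcplx x s).1 h)]
    ring

/-- The face of `[x,s]` opposite `x` is `s`; the other faces are `[x, s ∘ succAbove j]`,
with the opposite sign. -/
lemma cobound_linkK_tau {K : Finset (Finset V)} (hcplx : IsComplex K) {m : ℕ} [NeZero m]
    (x : V) (f : (Fin (m + 1) → V) → ℝ) :
    cobound (linkK K x) (tau K x f) = linkRestrict K x f - tau K x (cobound K f) := by
  funext s
  by_cases h : Allowed (linkK K x) s
  · have hfaces : ∀ j : Fin (m + 1), tau K x f (s ∘ Fin.succAbove j)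
        = f ((Fin.cons x s : Fin (m + 2) → V) ∘ Fin.succAbove j.succ) := by
      intro j
      rw [tau, if_pos (allowed_comp_succAbove (hcplx.linkK x) h j)]
      congr 1
      funext k
      refine Fin.cases ?_ (fun k => ?_) k <;> simp [Fin.succ_succAbove_succ]
    have hzero : (Fin.cons x s : Fin (m + 2) → V) ∘ Fin.succAbove 0 = s := by
      funext k
      simp
    rw [Pi.sub_apply, linkRestrict, if_pos h, tau, if_pos h, cobound, if_pos h, cobound,
      if_pos ((allowed_cons_iff hcplx x s).2 h), Fin.sum_univ_succ (n := m + 1), hzero]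
    simp only [hfaces, Fin.val_succ, pow_succ, Fin.val_zero, pow_zero, one_mul]
    rw [← sub_sub, sub_self, zero_sub, ← Finset.sum_neg_distrib]
    exact Finset.sum_congr rfl fun _ _ => by ring
  · simp [linkRestrict, tau, cobound, h]

lemma sum_innerC_cobound_linkK_tau_self {K : Finset (Finset V)} {n : ℕ} (hcplx : IsComplex K)
    (hn : 1 ≤ n) {m : ℕ} [NeZero m] {f : (Fin (m + 1) → V) → ℝ} (hf : IsCochain K (m + 1) f) :
    ∑ x : V, innerC (linkK K x) (n - 1) (m + 1) (cobound (linkK K x) (tau K x f))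
        (cobound (linkK K x) (tau K x f))
      = ((n - m : ℕ) : ℝ) * innerC K n (m + 1) f f + m * innerC K n (m + 1) f (lap K n f) := by
  simp only [cobound_linkK_tau hcplx, innerC_sub_sub_self, Finset.sum_add_distrib,
    Finset.sum_sub_distrib, ← Finset.mul_sum]
  rw [sum_innerC_linkRestrict_self hcplx hn hf, sum_innerC_linkRestrict_tau hcplx hn,
    sum_innerC_tau_self hcplx hn hf.cobound.2, ← innerC_lap_left K n hf.1,
    innerC_comm K n (m + 1) (lap K n f), lap]
  push_cast
  ring

end Localization

open scoped InnerProductSpace in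
/-- Expand `x` in an orthonormal eigenbasis of `T`: eigenvectors with eigenvalue `0` lie in
`ker T`, so they do not contribute. -/
lemma LinearMap.IsSymmetric.mul_inner_self_le_inner_apply_self {E : Type*}
    [NormedAddCommGroup E] [InnerProductSpace ℝ E] [FiniteDimensional ℝ E] {T : E →ₗ[ℝ] E}
    (hT : T.IsSymmetric) {c : ℝ} (hc : ∀ μ, Module.End.HasEigenvalue T μ → μ ≠ 0 → c ≤ μ)
    {x : E} (hx : ∀ y ∈ LinearMap.ker T, ⟪y, x⟫_ℝ = 0) : c * ⟪x, x⟫_ℝ ≤ ⟪T x, x⟫_ℝ := by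
  set b := hT.eigenvectorBasis rfl
  set μ := hT.eigenvalues rfl
  have hTb : ∀ j, T (b j) = μ j • b j := fun j => by
    exact_mod_cast hT.apply_eigenvectorBasis rfl j
  rw [← b.sum_inner_mul_inner x x, ← b.sum_inner_mul_inner (T x) x, Finset.mul_sum]
  refine Finset.sum_le_sum fun j _ => ?_
  rw [hT, hTb, real_inner_smul_right]
  by_cases hμ : μ j = 0
  · rw [hx (b j) (by simp [hTb, hμ])]
    simp
  · rw [real_inner_comm x (b j), mul_assoc]
    exact mul_le_mul_of_nonneg_right (hc _ (hT.hasEigenvalue_eigenvalues rfl j) hμ)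
      (mul_self_nonneg _)

section SpectralGap

variable [DecidableEq V] [Fintype V]

-- `(Fin m → V) → ℝ` carries the sup norm, which its submodules would otherwise inherit.
attribute [-instance] Submodule.normedAddCommGroup Submodule.seminormedAddCommGroup

def cochainSubmodule (K : Finset (Finset V)) (m : ℕ) : Submodule ℝ ((Fin m → V) → ℝ) where
  carrier := {f | IsCochain K m f}
  add_mem' {f g} hf hg :=
    ⟨fun σ v => by simp only [Pi.add_apply, hf.1 σ v, hg.1 σ v]; ring,
      fun v hv => by simp [hf.2 v hv, hg.2 v hv]⟩
  zero_mem' := ⟨fun σ v => by simp, fun _ _ => rfl⟩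
  smul_mem' c f hf :=
    ⟨fun σ v => by simp only [Pi.smul_apply, smul_eq_mul, hf.1 σ v]; ring,
      fun v hv => by simp [hf.2 v hv]⟩

noncomputable def lapLinearMap (K : Finset (Finset V)) (n m : ℕ) :
    ((Fin m → V) → ℝ) →ₗ[ℝ] ((Fin m → V) → ℝ) where
  toFun := lap K n
  map_add' f g := by simp only [lap, cobound_add, codiff_add]
  map_smul' c f := by simp only [lap, cobound_smul, codiff_smul, RingHom.id_apply]

/-- `C^{m-1}(K)` with `innerC` is a Euclidean space on which `Δ` is symmetric. -/
lemma mul_innerC_self_le_innerC_cobound {K : Finset (Finset V)} (hcplx : IsComplex K)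
    {n : ℕ} (hpure : IsPureDim K n) {m : ℕ} [NeZero m] {lam : ℝ}
    (hgap : ∀ c : ℝ, IsEigen K n m c → c ≠ 0 → lam ≤ c) {g : (Fin m → V) → ℝ}
    (hg : IsCochain K m g)
    (horth : ∀ h, IsCochain K m h → lap K n h = 0 → innerC K n m h g = 0) :
    lam * innerC K n m g g ≤ innerC K n (m + 1) (cobound K g) (cobound K g) := by
  let W := cochainSubmodule K m
  let T : W →ₗ[ℝ] W := (lapLinearMap K n m).restrict fun _ hf => hf.cobound.codiff hcplx
  let core : InnerProductSpace.Core ℝ W :=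
    { inner a b := innerC K n m a b
      conj_inner_symm a b := innerC_comm K n m b a
      re_inner_nonneg a := innerC_self_nonneg K n m a
      definite a ha := Subtype.ext (eq_zero_of_innerC_self_eq_zero hpure a.2 ha)
      add_left a b c := innerC_add_left K n m a b c
      smul_left a b r := innerC_smul_left K n m r a b }
  let _ : NormedAddCommGroup W := core.toNormedAddCommGroup
  let _ : InnerProductSpace ℝ W := InnerProductSpace.ofCore core.toCore
  have hT : T.IsSymmetric := fun a b => by
    change innerC K n m (lap K n a) b = innerC K n m a (lap K n b)
    rw [innerC_lap_left K n a.2.1, innerC_comm K n m a, innerC_lap_left K n b.2.1, innerC_comm]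
  rw [← innerC_lap_left K n hg.1]
  refine hT.mul_inner_self_le_inner_apply_self (x := ⟨g, hg⟩) (fun μ hμ hμ0 => ?_)
    fun y hy => horth y y.2 (congrArg Subtype.val hy)
  obtain ⟨v, hv⟩ := hμ.exists_hasEigenvector
  exact hgap μ ⟨v, fun h => hv.2 (Subtype.ext h), v.2,
    congrArg Subtype.val (Module.End.mem_eigenspace_iff.1 hv.1)⟩ hμ0

end SpectralGap

section LinkOrthogonality

variable [DecidableEq V] [Fintype V]

lemma innerC_eq_zero_of_codiff_eq_zero_of_const {K : Finset (Finset V)} {n : ℕ}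
    {g : (Fin 1 → V) → ℝ} (hg : ∀ t, ¬ Allowed K t → g t = 0) (hδ : codiff K n g = 0)
    {h : (Fin 1 → V) → ℝ} (hh : ∀ s t, Allowed K s → Allowed K t → h s = h t) :
    innerC K n 1 h g = 0 := by
  rw [innerC, div_eq_zero_iff]
  left
  by_cases hex : ∃ t₀ : Fin 1 → V, Allowed K t₀
  · obtain ⟨t₀, ht₀⟩ := hex
    have hconst : ∀ s : Fin 1 → V, (wt K n (Finset.image s Finset.univ) : ℝ) * h s * g s
        = h t₀ * ((wt K n (Finset.image s Finset.univ) : ℝ) * g s) := by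
      intro s
      by_cases hs : Allowed K s
      · rw [hh s t₀ hs ht₀]
        ring
      · rw [hg s hs]
        ring
    rw [Finset.sum_congr rfl fun s _ => hconst s, ← Finset.mul_sum,
      sum_wt_mul_eq_sum_weightedCodiff K n hg, weightedCodiff_eq_zero_of_codiff_eq_zero hδ]
    simp
  · exact Finset.sum_eq_zero fun s _ => by rw [hg s fun hs => hex ⟨s, hs⟩, mul_zero]

/-- Since `δ_x τ_x f = 0`, the vanishing of `H̃^{i-1}(Lk(x))` makes `τ_x f` orthogonal to the
harmonic cochains of the link. -/
lemma mul_innerC_tau_self_le {K : Finset (Finset V)} (hcplx : IsComplex K) {n : ℕ}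
    (hpure : IsPureDim K n) (hn : 1 ≤ n) {i : ℕ} [NeZero i] {f : (Fin (i + 1) → V) → ℝ}
    (hf : IsCochain K (i + 1) f) (hδf : codiff K n f = 0) {x : V}
    (hconst : i = 1 → ∀ h : (Fin 1 → V) → ℝ, IsCochain (linkK K x) 1 h →
      cobound (linkK K x) h = 0 →
      ∀ s t : Fin 1 → V, Allowed (linkK K x) s → Allowed (linkK K x) t → h s = h t)
    (hexact : ∀ j : ℕ, i = j + 2 → ∀ h : (Fin (j + 2) → V) → ℝ,
      IsCochain (linkK K x) (j + 2) h → cobound (linkK K x) h = 0 →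
      ∃ u : (Fin (j + 1) → V) → ℝ, IsCochain (linkK K x) (j + 1) u ∧ cobound (linkK K x) u = h)
    {lam : ℝ} (hgap : ∀ c : ℝ, IsEigen (linkK K x) (n - 1) i c → c ≠ 0 → lam ≤ c) :
    lam * innerC (linkK K x) (n - 1) i (tau K x f) (tau K x f)
      ≤ innerC (linkK K x) (n - 1) (i + 1) (cobound (linkK K x) (tau K x f))
          (cobound (linkK K x) (tau K x f)) := by
  have hpure_x := hpure.linkK hcplx hn x
  refine mul_innerC_self_le_innerC_cobound (hcplx.linkK x) hpure_x hgap hf.tau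
    fun h hh hlap => ?_
  have hclosed := cobound_eq_zero_of_lap_eq_zero hpure_x hh hlap
  obtain ⟨m, rfl⟩ : ∃ m, i = m + 1 := ⟨i - 1, (Nat.succ_pred_eq_of_ne_zero NeZero.out).symm⟩
  have hδτ := codiff_linkK_tau_eq_zero hcplx hn hf.1 hδf x
  rcases m with _ | j
  · exact innerC_eq_zero_of_codiff_eq_zero_of_const hf.tau.2 hδτ (hconst rfl h hh hclosed)
  · obtain ⟨u, -, rfl⟩ := hexact j rfl h hh hclosed
    rw [innerC_cobound _ _ u hf.tau.1, hδτ, innerC_zero_right]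

end LinkOrthogonality

theorem fundamental_inequality_lower_general
    [Fintype V] [DecidableEq V] (K : Finset (Finset V)) (n i : ℕ)
    (hcplx : IsComplex K) (hpure : IsPureDim K n) (hi1 : 1 ≤ i) (hin : i + 1 ≤ n)
    (hvanish1 : i = 1 → ∀ v ∈ verts K, ∀ f : (Fin 1 → V) → ℝ,
      IsCochain (linkK K v) 1 f → cobound (linkK K v) f = 0 →
      ∀ s t : Fin 1 → V, Allowed (linkK K v) s → Allowed (linkK K v) t → f s = f t)
    (hvanish2 : ∀ j : ℕ, i = j + 2 → ∀ v ∈ verts K, ∀ f : (Fin (j + 2) → V) → ℝ,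
      IsCochain (linkK K v) (j + 2) f → cobound (linkK K v) f = 0 →
      ∃ g : (Fin (j + 1) → V) → ℝ, IsCochain (linkK K v) (j + 1) g ∧
        cobound (linkK K v) g = f)
    (lam : ℝ)
    (hlam : ∀ v ∈ verts K, ∀ c : ℝ, IsEigen (linkK K v) (n - 1) i c → c ≠ 0 → lam ≤ c)
    (c : ℝ) (hc : IsEigen K n (i + 1) c) (hc0 : c ≠ 0) :
    ((i : ℝ) + 1) * lam - ((n : ℝ) - (i : ℝ)) ≤ (i : ℝ) * c := by
  obtain ⟨f, hf0, hf, hlap⟩ := hc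
  have : NeZero i := ⟨by omega⟩
  have hn : 1 ≤ n := by omega
  have hδf := codiff_eq_zero_of_lap_eq_smul hcplx hf.1 hlap hc0
  have hlocal : ∀ x : V, lam * innerC (linkK K x) (n - 1) i (tau K x f) (tau K x f)
      ≤ innerC (linkK K x) (n - 1) (i + 1) (cobound (linkK K x) (tau K x f))
          (cobound (linkK K x) (tau K x f)) := by
    intro x
    by_cases hx : x ∈ verts K
    · exact mul_innerC_tau_self_le hcplx hpure hn hf hδf (fun hi => hvanish1 hi x hx)
        (fun j hj => hvanish2 j hj x hx) (hlam x hx)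
    · rw [tau_eq_zero_of_not_mem_verts hcplx hx, innerC_zero_right, mul_zero]
      exact innerC_self_nonneg _ _ _ _
  have hsum := Finset.sum_le_sum fun x (_ : x ∈ Finset.univ) => hlocal x
  rw [← Finset.mul_sum, sum_innerC_tau_self hcplx hn hf.2,
    sum_innerC_cobound_linkK_tau_self hcplx hn hf, hlap, innerC_smul_right,
    Nat.cast_sub (by omega)] at hsum
  refine le_of_mul_le_mul_right ?_ (innerC_self_pos hpure hf hf0)
  linarith

/-- Fundamental Inequality, lower bound; Garland: assume that for every
vertex `v` of `X` the reduced cohomology `H̃^{i-1}(Lk(v),ℝ)` vanishes (for `i = 1`: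
closed `0`-cochains on `Lk(v)` are constant on the vertices of `Lk(v)`; for `i ≥ 2`:
closed `(i-1)`-cochains on `Lk(v)` are coboundaries), and that every nonzero eigenvalue
of `Δ_v` on `C^{i-1}(Lk(v))` is `≥ λ > 0`. Then every nonzero eigenvalue `c` of `Δ` on
`C^i(X)` satisfies `i·c ≥ (i+1)·λ - (n-i)`. -/
theorem fundamental_inequality_lower
    [Fintype V] [DecidableEq V] (K : Finset (Finset V)) (n i : ℕ)
    (hcplx : IsComplex K) (hpure : IsPureDim K n) (hi1 : 1 ≤ i) (hin : i + 1 ≤ n)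
    (hvanish1 : i = 1 → ∀ v ∈ verts K, ∀ f : (Fin 1 → V) → ℝ,
      IsCochain (linkK K v) 1 f → cobound (linkK K v) f = 0 →
      ∀ s t : Fin 1 → V, Allowed (linkK K v) s → Allowed (linkK K v) t → f s = f t)
    (hvanish2 : ∀ j : ℕ, i = j + 2 → ∀ v ∈ verts K, ∀ f : (Fin (j + 2) → V) → ℝ,
      IsCochain (linkK K v) (j + 2) f → cobound (linkK K v) f = 0 →
      ∃ g : (Fin (j + 1) → V) → ℝ, IsCochain (linkK K v) (j + 1) g ∧
        cobound (linkK K v) g = f)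
    (lam : ℝ) (hlampos : 0 < lam)
    (hlam : ∀ v ∈ verts K, ∀ c : ℝ, IsEigen (linkK K v) (n - 1) i c → c ≠ 0 → lam ≤ c)
    (c : ℝ) (hc : IsEigen K n (i + 1) c) (hc0 : c ≠ 0) :
    ((i : ℝ) + 1) * lam - ((n : ℝ) - (i : ℝ)) ≤ (i : ℝ) * c :=
  fundamental_inequality_lower_general K n i hcplx hpure hi1 hin hvanish1 hvanish2 lam hlam c hc hc0
end

section
/- Let X be a finite n-dimensional simplicial complex satisfying condition (1_X), and suppose t : V → T is a function on the vertex set (a type function) such that the vertices of every simplex of X have pairwise distinct types. Fix α ∈ T and let g ∈ C^0(X) be a 0-cochain that vanishes on every vertex of type different from α. Then (Δg, g) = n·(g, g). -/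
open Finset

open scoped Classical

variable {V : Type*}

/-! The Laplacian of a 0-cochain is `(Δg)(v) = ∑_x (w(xv)/w(v)) (g(v) - g(x))`, and since every
`n`-simplex through `v` has `n` further vertices, `∑_x w(xv) = n w(v)`. Hence in general
`(Δg, g) = n (g, g) - ∑ w(xv) g(x) g(v)`, the last sum running over ordered edges. For `g`
supported on vertices of one type, no edge joins two points of its support, so that sum vanishes. -/

lemma wt_le_wt_of_subset [DecidableEq V] (K : Finset (Finset V)) (n : ℕ) {s s' : Finset V}
    (h : s ⊆ s') : wt K n s' ≤ wt K n s :=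
  card_le_card <| monotone_filter_right K fun _ _ hu => ⟨h.trans hu.1, hu.2⟩

lemma image_univ_fin_one [DecidableEq V] (s : Fin 1 → V) : image s univ = {s 0} := by
  ext y
  simp

lemma image_univ_cons_fin_one [DecidableEq V] (x : V) (s : Fin 1 → V) :
    image (Fin.cons x s : Fin 2 → V) univ = {x, s 0} := by
  ext y
  simp [Fin.exists_fin_two, eq_comm]

section ZeroCochains

variable [Fintype V] [DecidableEq V]

noncomputable def neighbors (K : Finset (Finset V)) (v : V) : Finset V :=
  univ.filter fun x => x ≠ v ∧ {x, v} ∈ K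

lemma sum_wt_pair_eq_mul_wt {K : Finset (Finset V)} (hK : IsComplex K) (n : ℕ) (v : V) :
    ∑ x ∈ neighbors K v, wt K n {x, v} = n * wt K n {v} := by
  set r : V → Finset V → Prop := fun x u => {x, v} ⊆ u ∧ u.card = n + 1
  have hbelow : ∀ u ∈ K, ((neighbors K v).bipartiteBelow r u).card =
      if {v} ⊆ u ∧ u.card = n + 1 then n else 0 := by
    intro u hu
    split_ifs with hvu
    · obtain ⟨hv, hcard⟩ := hvu
      rw [singleton_subset_iff] at hv
      suffices (neighbors K v).bipartiteBelow r u = u.erase v by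
        rw [this, card_erase_of_mem hv, hcard, Nat.add_sub_cancel]
      ext x
      simp only [bipartiteBelow, neighbors, r, mem_filter, mem_univ, true_and, mem_erase,
        insert_subset_iff, singleton_subset_iff, hv, hcard, and_true]
      exact ⟨fun ⟨⟨hxv, _⟩, hxu⟩ => ⟨hxv, hxu⟩, fun ⟨hxv, hxu⟩ =>
        ⟨⟨hxv, hK.2 u hu _ (insert_subset hxu (singleton_subset_iff.2 hv)) (insert_nonempty _ _)⟩,
          hxu⟩⟩
    · refine card_eq_zero.2 (filter_eq_empty_iff.2 fun x _ hx => hvu ⟨?_, hx.2⟩)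
      exact (subset_insert x {v}).trans hx.1
  calc ∑ x ∈ neighbors K v, wt K n {x, v}
      = ∑ u ∈ K, ((neighbors K v).bipartiteBelow r u).card :=
        sum_card_bipartiteAbove_eq_sum_card_bipartiteBelow r
    _ = ∑ u ∈ K, if {v} ⊆ u ∧ u.card = n + 1 then n else 0 := sum_congr rfl hbelow
    _ = n * wt K n {v} := by rw [sum_ite, sum_const_zero, add_zero, sum_const, smul_eq_mul,
        mul_comm, wt]

lemma allowed_cons_fin_one_iff (K : Finset (Finset V)) (x : V) (s : Fin 1 → V) :
    Allowed K (Fin.cons x s : Fin 2 → V) ↔ x ≠ s 0 ∧ {x, s 0} ∈ K := by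
  simp [Allowed, image_univ_cons_fin_one, Fin.cons_injective_iff,
    Function.injective_of_subsingleton, ne_comm]

lemma cobound_cons_fin_one (K : Finset (Finset V)) (g : (Fin 1 → V) → ℝ) {x : V}
    {s : Fin 1 → V} (h : Allowed K (Fin.cons x s : Fin 2 → V)) :
    cobound K g (Fin.cons x s) = g s - g fun _ => x := by
  have hlast : (Fin.cons x s : Fin 2 → V) ∘ (1 : Fin 2).succAbove = fun _ => x := by
    ext i
    fin_cases i
    rfl
  simp [cobound, h, Fin.sum_univ_two, hlast, sub_eq_add_neg]

lemma wt_mul_lap_fin_one (K : Finset (Finset V)) (n : ℕ) (g : (Fin 1 → V) → ℝ)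
    (s : Fin 1 → V) :
    wt K n {s 0} * lap K n g s =
      ∑ x ∈ neighbors K (s 0), (wt K n {x, s 0} : ℝ) * (g s - g fun _ => x) := by
  rw [lap, codiff, mul_sum, neighbors, sum_filter]
  refine sum_congr rfl fun x _ => ?_
  by_cases hx : Allowed K (Fin.cons x s : Fin 2 → V)
  · rw [if_pos hx, if_pos ((allowed_cons_fin_one_iff K x s).1 hx), cobound_cons_fin_one K g hx,
      image_univ_cons_fin_one, image_univ_fin_one, ← mul_assoc, mul_div_cancel_of_imp']
    -- `w(v) = 0` forces `w(xv) = 0`, so the junk value `w(xv) / 0 = 0` does no harm.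
    intro hw
    have hle := wt_le_wt_of_subset K n (subset_insert x {s 0})
    exact_mod_cast Nat.le_zero.1 (Nat.cast_eq_zero.1 hw ▸ hle)
  · rw [if_neg hx, if_neg (mt (allowed_cons_fin_one_iff K x s).2 hx), mul_zero]

lemma wt_mul_lap_mul_fin_one {K : Finset (Finset V)} (hK : IsComplex K) (n : ℕ)
    (g : (Fin 1 → V) → ℝ) (s : Fin 1 → V) :
    wt K n {s 0} * lap K n g s * g s =
      n * (wt K n {s 0} * g s * g s) -
        ∑ x ∈ neighbors K (s 0), (wt K n {x, s 0} : ℝ) * (g (fun _ => x) * g s) := by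
  have hsum : ∑ x ∈ neighbors K (s 0), (wt K n {x, s 0} : ℝ) = n * wt K n {s 0} :=
    mod_cast sum_wt_pair_eq_mul_wt hK n (s 0)
  calc wt K n {s 0} * lap K n g s * g s
      = ∑ x ∈ neighbors K (s 0), (wt K n {x, s 0} : ℝ) * (g s - g fun _ => x) * g s := by
        rw [wt_mul_lap_fin_one, sum_mul]
    _ = (∑ x ∈ neighbors K (s 0), (wt K n {x, s 0} : ℝ)) * (g s * g s) -
          ∑ x ∈ neighbors K (s 0), (wt K n {x, s 0} : ℝ) * (g (fun _ => x) * g s) := by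
        rw [sum_mul, ← sum_sub_distrib]
        exact sum_congr rfl fun x _ => by ring
    _ = _ := by rw [hsum]; ring

lemma mul_eq_zero_of_mem_neighbors {K : Finset (Finset V)} {T : Type*} {t : V → T}
    (ht : ∀ s ∈ K, Set.InjOn t (s : Set V)) {α : T} {g : (Fin 1 → V) → ℝ}
    (hα : ∀ s : Fin 1 → V, t (s 0) ≠ α → g s = 0) {s : Fin 1 → V} {x : V}
    (hx : x ∈ neighbors K (s 0)) : g (fun _ => x) * g s = 0 := by
  obtain ⟨hxs, hedge⟩ := (mem_filter.1 hx).2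
  by_cases hts : t (s 0) = α
  · have htx : t x ≠ α := fun htx => hxs (ht _ hedge (by simp) (by simp) (htx.trans hts.symm))
    rw [hα (fun _ => x) htx, zero_mul]
  · rw [hα s hts, mul_zero]

end ZeroCochains

theorem type_supported_cochain_rayleigh_general
    [Fintype V] [DecidableEq V] (K : Finset (Finset V)) (n : ℕ)
    (hcplx : IsComplex K)
    {T : Type*} (t : V → T) (ht : ∀ s ∈ K, Set.InjOn t (s : Set V))
    (α : T) (g : (Fin 1 → V) → ℝ)
    (hα : ∀ s : Fin 1 → V, t (s 0) ≠ α → g s = 0) :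
    innerC K n 1 (lap K n g) g = (n : ℝ) * innerC K n 1 g g := by
  have hvertex : ∀ s : Fin 1 → V, (wt K n (image s univ) : ℝ) * lap K n g s * g s =
      n * (wt K n (image s univ) * g s * g s) := fun s => by
    rw [image_univ_fin_one, wt_mul_lap_mul_fin_one hcplx,
      sum_eq_zero fun x hx => by rw [mul_eq_zero_of_mem_neighbors ht hα hx, mul_zero], sub_zero]
  simp only [innerC, hvertex, ← mul_sum, Nat.factorial_one, Nat.cast_one, div_one]

/-- if `t : V → T` is a type function such that the vertices of every
simplex of `X` have pairwise distinct types, `α ∈ T`, and `g ∈ C^0(X)` vanishes on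
every vertex whose type differs from `α`, then `(Δg, g) = n·(g,g)`. -/
theorem type_supported_cochain_rayleigh
    [Fintype V] [DecidableEq V] (K : Finset (Finset V)) (n : ℕ)
    (hcplx : IsComplex K) (hpure : IsPureDim K n)
    {T : Type*} (t : V → T) (ht : ∀ s ∈ K, Set.InjOn t (s : Set V))
    (α : T) (g : (Fin 1 → V) → ℝ) (hg : IsCochain K 1 g)
    (hα : ∀ s : Fin 1 → V, t (s 0) ≠ α → g s = 0) :
    innerC K n 1 (lap K n g) g = (n : ℝ) * innerC K n 1 g g :=
  type_supported_cochain_rayleigh_general K n hcplx t ht α g hα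
end
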